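/- In the Lenski model, fix 0 < a ≤ M and let (p_i)_{i≥0} be the sequence with initial distribution δ_a and mutant distribution q^a. Then: (1) if ∫ β q^a(dx)/(1 − ((1−β)/γ)^{1−x/a}) > 1 (the integral possibly infinite), there is a unique s_a ∈ (0, a^{-1}·log(γ/(1−β))) with ∫ β q^a(dx)/(1 − ((1−β)/γ)e^{s_a x}) = 1, and (p_i) converges in total variation to p^{a,*}(dx) = β q^a(dx)/(1 − ((1−β)/γ)e^{s_a x}); (2) if ∫ β q^a(dx)/(1 − ((1−β)/γ)^{1−x/a}) ≤ 1, then (p_i) converges in total variation to p^{a,*}(dx) = β q^a(dx)/(1 − ((1−β)/γ)^{1−x/a}) + (1 − ∫ β q^a(dy)/(1 − ((1−β)/γ)^{1−y/a})) δ_a. -/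

import Mathlib

/-!
Write `ν = q^a`, `r = (1 - β) / γ` and `t_n` for the length of day `n`. By induction
`p_n = f_n · ν|_{[0, a)} + c_n δ_a` with `f_{n+1}(x) = r e^{t_n x} f_n(x) + β` and
`c_{n+1} = r e^{t_n a} c_n + β ν{a}`. Since `p_{n+1}` moves mass from the atom at `a` into
`[0, a)`, where `e^{t x}` is smaller, `∫ e^{t_n x} dp_{n+1} ≤ γ`, so the days get longer; and
conservation of mass forces `r e^{t_n a} < 1`, i.e. `t_n < s_max = a⁻¹ log (γ / (1 - β))`.
Hence `t_n ↑ T ≤ s_max`, `f_n ↑ β / (1 - r e^{T x})` and `c_n → c`, which is convergence in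
total variation. Passing to the limit in the recursion for `c_n`: if `T < s_max` then
`c = β ν{a} / (1 - r e^{T a})`, the limit is `β ν(dx) / (1 - r e^{T x})` and has mass one, which
pins down `T` because `s ↦ ∫ β / (1 - r e^{s x}) dν` is increasing; if `T = s_max` then
`ν{a} = 0` and `r e^{s_max x} = r^{1 - x/a}`. Which case occurs is decided by
`∫ β / (1 - r^{1 - x/a}) dν`, the limit of that increasing function at `s_max`.
-/

open MeasureTheory Set Filter

/-- The duration `t_u` of a day in the Lenski model: the (unique, when `u({0}) < 1` and `u`
is a probability measure on `[0,M]`) positive `t` with `∫ e^{t x} u(dx) = γ`, here realized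
as the infimum of the positive times at which the capacity `γ` has been reached. -/
noncomputable def lenskiTime (γ : ℝ) (u : MeasureTheory.Measure ℝ) : ℝ :=
  sInf {t : ℝ | 0 < t ∧ γ ≤ ∫ x, Real.exp (t * x) ∂u}

/-- The Lenski iteration:
`p_i(dx) = (1-β) (e^{t_{p_{i-1}} x}/γ) p_{i-1}(dx) + β q(dx)`. -/
noncomputable def lenski (β γ : ℝ) (q p₀ : MeasureTheory.Measure ℝ) :
    ℕ → MeasureTheory.Measure ℝ
  | 0 => p₀
  | i + 1 =>
      ENNReal.ofReal (1 - β) •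
          ((lenski β γ q p₀ i).withDensity fun x =>
            ENNReal.ofReal (Real.exp (lenskiTime γ (lenski β γ q p₀ i) * x) / γ))
        + ENNReal.ofReal β • q

/-- Convergence in total variation (uniform convergence over all measurable sets). -/
def TendstoTV (p : ℕ → MeasureTheory.Measure ℝ) (μ : MeasureTheory.Measure ℝ) : Prop :=
  ∀ ε : ℝ, 0 < ε → ∃ N : ℕ, ∀ i ≥ N, ∀ A : Set ℝ, MeasurableSet A →
    |((p i) A).toReal - (μ A).toReal| < ε

/-- Weak convergence of measures (tested against bounded continuous functions). -/
def TendstoWeak (p : ℕ → MeasureTheory.Measure ℝ) (μ : MeasureTheory.Measure ℝ) : Prop :=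
  ∀ f : BoundedContinuousFunction ℝ ℝ,
    Filter.Tendsto (fun i => ∫ x, f x ∂(p i)) Filter.atTop (nhds (∫ x, f x ∂μ))

/-- The supremum `m_u` of the (closed) support of a probability measure `u` on `[0,M]`:
the smallest `x` with no mass strictly above it. -/
noncomputable def msupp (u : MeasureTheory.Measure ℝ) : ℝ :=
  sInf {x : ℝ | u (Set.Ioi x) = 0}

/-- `h^a`: the pushforward of `h` under `x ↦ min x a`, i.e. `h` on `[0,a)` plus
`h([a,∞))·δ_a`. -/
noncomputable def trunc (a : ℝ) (h : MeasureTheory.Measure ℝ) : MeasureTheory.Measure ℝ :=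
  MeasureTheory.Measure.map (fun x => min x a) h

open scoped ENNReal Topology
open Real

theorem integrable_of_continuousOn_of_ae_mem {X E : Type*} [TopologicalSpace X] [T2Space X]
    [MeasurableSpace X] [OpensMeasurableSpace X] [NormedAddCommGroup E] {μ : Measure X}
    [IsFiniteMeasure μ] {K : Set X} (hK : IsCompact K) (hμ : ∀ᵐ x ∂μ, x ∈ K) {f : X → E}
    (hf : ContinuousOn f K) : Integrable f μ := by
  have := hf.integrableOn_compact (μ := μ) hK
  rwa [IntegrableOn, Measure.restrict_eq_self_of_ae_mem hμ] at this

section ExpIntegral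

variable {μ : Measure ℝ} {a : ℝ}

theorem integrable_exp_mul_of_ae_mem_Icc [IsFiniteMeasure μ] (hμ : ∀ᵐ x ∂μ, x ∈ Icc 0 a)
    (t : ℝ) : Integrable (fun x => exp (t * x)) μ :=
  integrable_of_continuousOn_of_ae_mem isCompact_Icc hμ (by fun_prop)

theorem toReal_measure_singleton_mul_le_integral {f : ℝ → ℝ} (hf : Integrable f μ)
    (hf0 : 0 ≤ᵐ[μ] f) : (μ {a}).toReal * f a ≤ ∫ x, f x ∂μ := by
  simpa [Measure.restrict_singleton, integral_smul_measure] using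
    setIntegral_le_integral (s := {a}) hf hf0

theorem strictMono_integral_exp_mul [IsFiniteMeasure μ] (hμ : ∀ᵐ x ∂μ, x ∈ Icc 0 a)
    (ha : 0 < a) (hatom : μ {a} ≠ 0) : StrictMono fun t => ∫ x, exp (t * x) ∂μ := by
  intro t t' htt'
  have hint := integrable_exp_mul_of_ae_mem_Icc hμ
  have hle := toReal_measure_singleton_mul_le_integral (a := a)
    (f := fun x => exp (t' * x) - exp (t * x)) ((hint t').sub (hint t))
    (by filter_upwards [hμ] with x hx
        exact sub_nonneg.2 (exp_le_exp.2 (mul_le_mul_of_nonneg_right htt'.le hx.1)))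
  rw [integral_sub (hint t') (hint t)] at hle
  have hμa : 0 < (μ {a}).toReal := ENNReal.toReal_pos hatom (measure_ne_top μ _)
  have hexp : exp (t * a) < exp (t' * a) := exp_lt_exp.2 (mul_lt_mul_of_pos_right htt' ha)
  simp only at hle ⊢
  nlinarith

theorem exists_integral_exp_mul_eq [IsProbabilityMeasure μ] (hμ : ∀ᵐ x ∂μ, x ∈ Icc 0 a)
    (ha : 0 < a) (hatom : μ {a} ≠ 0) {γ : ℝ} (hγ : 1 < γ) :
    ∃ τ, 0 < τ ∧ ∫ x, exp (τ * x) ∂μ = γ := by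
  set g := fun t => ∫ x, exp (t * x) ∂μ
  have hg0 : g 0 = 1 := by simp [g]
  set c := (μ {a}).toReal
  have hc : 0 < c := ENNReal.toReal_pos hatom (measure_ne_top μ _)
  -- at `T`, the atom at `a` alone already carries mass `γ`
  set T := log (γ / c) / a
  have hγT : γ ≤ g T := by
    have hle := toReal_measure_singleton_mul_le_integral (a := a)
      (integrable_exp_mul_of_ae_mem_Icc hμ T) (ae_of_all _ fun x => (exp_pos _).le)
    rwa [div_mul_cancel₀ _ ha.ne', exp_log (by positivity), mul_div_cancel₀ _ hc.ne'] at hle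
  have hmono := strictMono_integral_exp_mul hμ ha hatom
  have hT : 0 ≤ T := (hmono.lt_iff_lt.1 (hg0.trans_lt (by linarith))).le
  obtain ⟨τ, hτ, hgτ⟩ := intermediate_value_Icc hT
    (ProbabilityTheory.continuous_mgf (X := id) (integrable_exp_mul_of_ae_mem_Icc hμ)).continuousOn
    ⟨hg0.trans_le (by linarith), hγT⟩
  refine ⟨τ, lt_of_le_of_ne hτ.1 ?_, hgτ⟩
  rintro rfl
  exact absurd (hg0.symm.trans hgτ) (by linarith)

theorem lenskiTime_eq_of_strictMono {γ τ : ℝ} (hmono : StrictMono fun t => ∫ x, exp (t * x) ∂μ)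
    (hτ : 0 < τ) (hγ : ∫ x, exp (τ * x) ∂μ = γ) : lenskiTime γ μ = τ := by
  have : {t : ℝ | 0 < t ∧ γ ≤ ∫ x, exp (t * x) ∂μ} = Ici τ := by
    ext t
    rw [← hγ]
    exact ⟨fun h => hmono.le_iff_le.1 h.2, fun h => ⟨hτ.trans_le h, hmono.monotone h⟩⟩
  rw [lenskiTime, this, csInf_Ici]

theorem lenskiTime_pos_and_integral_eq [IsProbabilityMeasure μ] (hμ : ∀ᵐ x ∂μ, x ∈ Icc 0 a)
    (ha : 0 < a) (hatom : μ {a} ≠ 0) {γ : ℝ} (hγ : 1 < γ) :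
    0 < lenskiTime γ μ ∧ ∫ x, exp (lenskiTime γ μ * x) ∂μ = γ := by
  obtain ⟨τ, hτ, hgτ⟩ := exists_integral_exp_mul_eq hμ ha hatom hγ
  rw [lenskiTime_eq_of_strictMono (strictMono_integral_exp_mul hμ ha hatom) hτ hgτ]
  exact ⟨hτ, hgτ⟩

end ExpIntegral

section WithDensityAddSMul

variable {ρ μ₀ : Measure ℝ}

theorem ae_mem_withDensity_add_smul_dirac {K : Set ℝ} (hK : MeasurableSet K)
    (hρ : ∀ᵐ x ∂ρ, x ∈ K) {a : ℝ} (ha : a ∈ K) (g : ℝ → ℝ≥0∞) (c : ℝ≥0∞) :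
    ∀ᵐ x ∂(ρ.withDensity g + c • Measure.dirac a), x ∈ K := by
  rw [ae_add_measure_iff]
  exact ⟨(withDensity_absolutelyContinuous ρ g).ae_le hρ,
    Measure.ae_smul_measure ((ae_dirac_iff hK).2 ha) c⟩

theorem integral_withDensity_add_smul_dirac [IsFiniteMeasure ρ] {a c : ℝ}
    (hρ : ∀ᵐ x ∂ρ, x ∈ Icc 0 a) {f h : ℝ → ℝ} (hf : Continuous f) (hf0 : ∀ x, 0 ≤ f x)
    (hc : 0 ≤ c) (hh : Continuous h) :
    ∫ x, h x ∂(ρ.withDensity (fun x => ENNReal.ofReal (f x)) + ENNReal.ofReal c • Measure.dirac a)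
      = ∫ x, f x * h x ∂ρ + c * h a := by
  have hfin : ∀ᵐ x ∂ρ, ENNReal.ofReal (f x) < ∞ := ae_of_all _ fun _ => ENNReal.ofReal_lt_top
  have hfm : Measurable fun x => ENNReal.ofReal (f x) := by fun_prop
  have htoReal : ∀ x, (ENNReal.ofReal (f x)).toReal • h x = f x * h x := fun x => by
    rw [ENNReal.toReal_ofReal (hf0 x), smul_eq_mul]
  have hint : Integrable h (ρ.withDensity fun x => ENNReal.ofReal (f x)) := by
    rw [integrable_withDensity_iff_integrable_smul' hfm hfin]
    simp_rw [htoReal]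
    exact integrable_of_continuousOn_of_ae_mem isCompact_Icc hρ (by fun_prop)
  rw [integral_add_measure hint ((integrable_dirac enorm_lt_top).smul_measure
      ENNReal.ofReal_ne_top), integral_withDensity_eq_integral_toReal_smul hfm hfin,
    integral_smul_measure, integral_dirac, ENNReal.toReal_ofReal hc, smul_eq_mul]
  simp_rw [htoReal]

theorem toReal_withDensity_add_smul_apply [IsFiniteMeasure μ₀] {g : ℝ → ℝ}
    (hg : Integrable g ρ) (hg0 : 0 ≤ᵐ[ρ] g) {c : ℝ} (hc : 0 ≤ c) {A : Set ℝ}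
    (hA : MeasurableSet A) :
    ((ρ.withDensity (fun x => ENNReal.ofReal (g x)) + ENNReal.ofReal c • μ₀) A).toReal
      = ∫ x in A, g x ∂ρ + c * (μ₀ A).toReal := by
  rw [Measure.add_apply, withDensity_apply _ hA,
    ← ofReal_integral_eq_lintegral_ofReal hg.restrict (ae_restrict_of_ae hg0),
    Measure.smul_apply, smul_eq_mul, ENNReal.toReal_add ENNReal.ofReal_ne_top
      (ENNReal.mul_ne_top ENNReal.ofReal_ne_top (measure_ne_top μ₀ A)),
    ENNReal.toReal_ofReal (setIntegral_nonneg_of_ae_restrict (ae_restrict_of_ae hg0)),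
    ENNReal.toReal_mul, ENNReal.toReal_ofReal hc]

theorem tendstoTV_withDensity_add_smul [IsProbabilityMeasure μ₀] {f : ℕ → ℝ → ℝ} {F : ℝ → ℝ}
    {c : ℕ → ℝ} {c₀ : ℝ} (hf : ∀ n, Integrable (f n) ρ) (hF : Integrable F ρ)
    (hf0 : ∀ n, 0 ≤ᵐ[ρ] f n) (hfF : ∀ n, f n ≤ᵐ[ρ] F)
    (hlim : Tendsto (fun n => ∫ x, f n x ∂ρ) atTop (𝓝 (∫ x, F x ∂ρ)))
    (hc : ∀ n, 0 ≤ c n) (hclim : Tendsto c atTop (𝓝 c₀)) :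
    TendstoTV (fun n => ρ.withDensity (fun x => ENNReal.ofReal (f n x)) + ENNReal.ofReal (c n) • μ₀)
      (ρ.withDensity (fun x => ENNReal.ofReal (F x)) + ENNReal.ofReal c₀ • μ₀) := by
  have hF0 : 0 ≤ᵐ[ρ] F := by filter_upwards [hf0 0, hfF 0] with x h0 h1 using h0.trans h1
  have hc₀ : 0 ≤ c₀ := ge_of_tendsto' hclim hc
  have hbound : ∀ n A, MeasurableSet A →
      |((ρ.withDensity (fun x => ENNReal.ofReal (f n x)) + ENNReal.ofReal (c n) • μ₀) A).toReal
        - ((ρ.withDensity (fun x => ENNReal.ofReal (F x)) + ENNReal.ofReal c₀ • μ₀) A).toReal|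
      ≤ (∫ x, F x ∂ρ - ∫ x, f n x ∂ρ) + |c n - c₀| := by
    intro n A hA
    rw [toReal_withDensity_add_smul_apply (hf n) (hf0 n) (hc n) hA,
      toReal_withDensity_add_smul_apply hF hF0 hc₀ hA]
    have hgap : 0 ≤ᵐ[ρ] fun x => F x - f n x := by
      filter_upwards [hfF n] with x hx using sub_nonneg.2 hx
    have hset : ∫ x in A, (F x - f n x) ∂ρ ≤ ∫ x, (F x - f n x) ∂ρ :=
      setIntegral_le_integral (hF.sub (hf n)) hgap
    have hset0 : 0 ≤ ∫ x in A, (F x - f n x) ∂ρ :=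
      setIntegral_nonneg_of_ae_restrict (ae_restrict_of_ae hgap)
    rw [integral_sub hF.restrict (hf n).restrict] at hset hset0
    rw [integral_sub hF (hf n)] at hset
    have hμ₀ : (μ₀ A).toReal ≤ 1 :=
      ENNReal.toReal_le_of_le_ofReal zero_le_one (by simp [prob_le_one])
    have hμ₀' : |(c n - c₀) * (μ₀ A).toReal| ≤ |c n - c₀| := by
      rw [abs_mul, abs_of_nonneg ENNReal.toReal_nonneg]
      exact mul_le_of_le_one_right (abs_nonneg _) hμ₀
    rw [abs_le] at hμ₀' ⊢
    constructor <;> nlinarith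
  have hgap : Tendsto (fun n => (∫ x, F x ∂ρ - ∫ x, f n x ∂ρ) + |c n - c₀|) atTop (𝓝 0) := by
    have := ((tendsto_const_nhds (x := ∫ x, F x ∂ρ)).sub hlim).add
      ((hclim.sub_const c₀).abs)
    simpa using this
  intro ε hε
  obtain ⟨N, hN⟩ := eventually_atTop.1 (hgap.eventually (gt_mem_nhds hε))
  exact ⟨N, fun n hn A hA => (hbound n A hA).trans_lt (hN n hn)⟩

end WithDensityAddSMul

theorem restrict_Iio_add_smul_dirac {ν : Measure ℝ} {a : ℝ} (hν : ∀ᵐ x ∂ν, x ≤ a) :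
    ν.restrict (Iio a) + ν {a} • Measure.dirac a = ν := by
  have hIci : Ici a =ᵐ[ν] ({a} : Set ℝ) := by
    filter_upwards [hν] with x hx
    simp only [eq_iff_iff]
    exact ⟨fun h => le_antisymm hx h, fun h => h.ge⟩
  have h := Measure.restrict_add_restrict_compl (μ := ν) (s := Iio a) measurableSet_Iio
  rwa [compl_Iio, Measure.restrict_congr_set hIci, Measure.restrict_singleton] at h

theorem withDensity_eq_restrict_Iio_add {ν : Measure ℝ} {a : ℝ} (hν : ∀ᵐ x ∂ν, x ≤ a)
    (g : ℝ → ℝ≥0∞) :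
    ν.withDensity g = (ν.restrict (Iio a)).withDensity g + (ν {a} * g a) • Measure.dirac a := by
  conv_lhs => rw [← restrict_Iio_add_smul_dirac hν]
  rw [withDensity_add_measure, withDensity_smul_measure, dirac_withDensity, smul_smul]

theorem lintegral_eq_restrict_Iio_add {ν : Measure ℝ} {a : ℝ} (hν : ∀ᵐ x ∂ν, x ≤ a)
    (g : ℝ → ℝ≥0∞) : ∫⁻ x, g x ∂ν = ∫⁻ x, g x ∂ν.restrict (Iio a) + ν {a} * g a := by
  conv_lhs => rw [← restrict_Iio_add_smul_dirac hν]
  rw [lintegral_add_measure, lintegral_smul_measure, lintegral_dirac, smul_eq_mul]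

theorem integral_eq_restrict_Iio_add {ν : Measure ℝ} {a : ℝ} [IsFiniteMeasure ν]
    (hν : ∀ᵐ x ∂ν, x ≤ a) {g : ℝ → ℝ} (hg : Integrable g ν) :
    ∫ x, g x ∂ν = ∫ x, g x ∂ν.restrict (Iio a) + (ν {a}).toReal * g a := by
  have hdecomp := restrict_Iio_add_smul_dirac hν
  have hg' := hg
  rw [← hdecomp] at hg'
  conv_lhs => rw [← hdecomp]
  rw [integral_add_measure hg'.left_of_add_measure hg'.right_of_add_measure,
    integral_smul_measure, integral_dirac, smul_eq_mul]

namespace Lenski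

/-- The time at which `((1 - β) / γ) e^{s a} = 1`. -/
noncomputable def maxTime (β γ a : ℝ) : ℝ := a⁻¹ * log (γ / (1 - β))

noncomputable def stationaryDensity (β γ s x : ℝ) : ℝ := β / (1 - (1 - β) / γ * exp (s * x))

noncomputable def criticalDensity (β γ a x : ℝ) : ℝ≥0∞ :=
  ENNReal.ofReal β * (ENNReal.ofReal (1 - ((1 - β) / γ) ^ (1 - x / a)))⁻¹

section Arithmetic

variable {β γ a : ℝ}

theorem mul_exp_maxTime_mul (hβ : β < 1) (hγ : 0 < γ) (ha : 0 < a) :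
    (1 - β) / γ * exp (maxTime β γ a * a) = 1 := by
  have : 0 < 1 - β := by linarith
  have hmul : maxTime β γ a * a = log (γ / (1 - β)) := by rw [maxTime]; field_simp
  rw [hmul, exp_log (by positivity)]
  field_simp

theorem mul_exp_lt_one (hβ : β < 1) (hγ : 0 < γ) (ha : 0 < a) {y : ℝ}
    (hy : y < maxTime β γ a * a) : (1 - β) / γ * exp y < 1 := by
  have : 0 < 1 - β := by linarith
  calc (1 - β) / γ * exp y < (1 - β) / γ * exp (maxTime β γ a * a) := by gcongr
    _ = 1 := mul_exp_maxTime_mul hβ hγ ha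

theorem mul_exp_mul_lt_one_of_mem_Icc (hβ : β < 1) (hγ : 0 < γ) (ha : 0 < a) {s x : ℝ}
    (hs0 : 0 ≤ s) (hs : s < maxTime β γ a) (hx : x ∈ Icc 0 a) : (1 - β) / γ * exp (s * x) < 1 :=
  mul_exp_lt_one hβ hγ ha
    ((mul_le_mul_of_nonneg_left hx.2 hs0).trans_lt (mul_lt_mul_of_pos_right hs ha))

theorem maxTime_pos (hβ : 0 < β) (hβ1 : β < 1) (hγ : 1 < γ) (ha : 0 < a) : 0 < maxTime β γ a := by
  have : 1 < γ / (1 - β) := by rw [one_lt_div (by linarith)]; linarith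
  exact mul_pos (inv_pos.2 ha) (log_pos this)

theorem rpow_one_sub_div_eq (hβ : β < 1) (hγ : 0 < γ) (ha : 0 < a) (x : ℝ) :
    ((1 - β) / γ) ^ (1 - x / a) = (1 - β) / γ * exp (maxTime β γ a * x) := by
  have : 0 < 1 - β := by linarith
  have hr : 0 < (1 - β) / γ := by positivity
  set L := log (γ / (1 - β))
  have hrL : (1 - β) / γ = exp (-L) := by rw [exp_neg, exp_log (by positivity), inv_div]
  rw [rpow_def_of_pos hr, maxTime, hrL, log_exp, ← exp_add]
  congr 1
  field_simp
  ring

theorem stationaryDensity_pos (hβ : 0 < β) {s x : ℝ} (h : (1 - β) / γ * exp (s * x) < 1) :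
    0 < stationaryDensity β γ s x :=
  div_pos hβ (by linarith)

theorem stationaryDensity_le_stationaryDensity (hβ : 0 < β) (hβ1 : β < 1) (hγ : 0 < γ)
    {s x s' x' : ℝ} (hle : s * x ≤ s' * x') (h : (1 - β) / γ * exp (s' * x') < 1) :
    stationaryDensity β γ s x ≤ stationaryDensity β γ s' x' := by
  have : 0 < 1 - β := by linarith
  have hexp : (1 - β) / γ * exp (s * x) ≤ (1 - β) / γ * exp (s' * x') := by gcongr
  exact div_le_div_of_nonneg_left hβ.le (by linarith) (by linarith)

theorem stationaryDensity_lt_stationaryDensity (hβ : 0 < β) (hβ1 : β < 1) (hγ : 0 < γ)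
    {s x s' x' : ℝ} (hlt : s * x < s' * x') (h : (1 - β) / γ * exp (s' * x') < 1) :
    stationaryDensity β γ s x < stationaryDensity β γ s' x' := by
  have : 0 < 1 - β := by linarith
  have hexp : (1 - β) / γ * exp (s * x) < (1 - β) / γ * exp (s' * x') := by gcongr
  exact div_lt_div_of_pos_left hβ (by linarith) (by linarith)

theorem stationaryDensity_eq_mul_add {s x : ℝ} (h : (1 - β) / γ * exp (s * x) ≠ 1) :
    stationaryDensity β γ s x = (1 - β) / γ * exp (s * x) * stationaryDensity β γ s x + β := by
  unfold stationaryDensity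
  generalize (1 - β) / γ * exp (s * x) = u at h ⊢
  have : 1 - u ≠ 0 := sub_ne_zero.2 (Ne.symm h)
  field_simp
  ring

theorem stationaryDensity_zero_lt_one (hβ0 : 0 ≤ β) (hβ : β < 1) (hγ : 1 < γ) (s : ℝ) :
    stationaryDensity β γ s 0 < 1 := by
  have hr : (1 - β) / γ < 1 - β := div_lt_self (by linarith) hγ
  rw [stationaryDensity, mul_zero, exp_zero, mul_one, div_lt_one (by linarith)]
  linarith

theorem measurable_stationaryDensity (s : ℝ) : Measurable (stationaryDensity β γ s) := by
  unfold stationaryDensity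
  fun_prop

theorem criticalDensity_of_lt (hβ : 0 < β) (hβ1 : β < 1) (hγ : 1 < γ) (ha : 0 < a) {x : ℝ}
    (hx : x < a) :
    criticalDensity β γ a x = ENNReal.ofReal (stationaryDensity β γ (maxTime β γ a) x) := by
  have hγ0 : 0 < γ := by linarith
  have hlt := mul_exp_lt_one hβ1 hγ0 ha
    (mul_lt_mul_of_pos_left hx (maxTime_pos hβ hβ1 hγ ha))
  rw [criticalDensity, rpow_one_sub_div_eq hβ1 hγ0 ha, stationaryDensity,
    ENNReal.ofReal_div_of_pos (by linarith)]
  exact (div_eq_mul_inv _ _).symm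

theorem criticalDensity_self (hβ : 0 < β) (ha : a ≠ 0) : criticalDensity β γ a a = ∞ := by
  simp [criticalDensity, div_self ha, hβ]

theorem ofReal_stationaryDensity_le_criticalDensity (hβ : 0 < β) (hβ1 : β < 1) (hγ : 1 < γ)
    (ha : 0 < a) {s x : ℝ} (hs : s ≤ maxTime β γ a) (hx : x ∈ Icc 0 a) :
    ENNReal.ofReal (stationaryDensity β γ s x) ≤ criticalDensity β γ a x := by
  rcases hx.2.lt_or_eq with hxa | rfl
  · rw [criticalDensity_of_lt hβ hβ1 hγ ha hxa]
    exact ENNReal.ofReal_le_ofReal (stationaryDensity_le_stationaryDensity hβ hβ1 (by linarith)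
      (mul_le_mul_of_nonneg_right hs hx.1)
      (mul_exp_lt_one hβ1 (by linarith) ha
        (mul_lt_mul_of_pos_left hxa (maxTime_pos hβ hβ1 hγ ha))))
  · rw [criticalDensity_self hβ ha.ne']
    exact le_top

end Arithmetic

theorem ofReal_one_sub_mul_add_mul {β u w : ℝ} (hβ0 : 0 ≤ β) (hβ1 : β ≤ 1) (hu : 0 ≤ u)
    (hw : 0 ≤ w) :
    ENNReal.ofReal (1 - β) * ENNReal.ofReal u + ENNReal.ofReal β * ENNReal.ofReal w
      = ENNReal.ofReal ((1 - β) * u + β * w) := by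
  have : 0 ≤ 1 - β := by linarith
  rw [← ENNReal.ofReal_mul this, ← ENNReal.ofReal_mul hβ0,
    ← ENNReal.ofReal_add (by positivity) (by positivity)]

theorem lenski_step_withDensity_add_dirac {β γ a t c m : ℝ} {ρ ν : Measure ℝ} {f : ℝ → ℝ}
    (hβ0 : 0 ≤ β) (hβ1 : β ≤ 1) (hγ : 0 < γ) (hf : Measurable f) (hf0 : ∀ x, 0 ≤ f x)
    (hc : 0 ≤ c) (hm : 0 ≤ m) (hν : ν = ρ + ENNReal.ofReal m • Measure.dirac a) :
    ENNReal.ofReal (1 - β) •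
        (ρ.withDensity (fun x => ENNReal.ofReal (f x))
          + ENNReal.ofReal c • Measure.dirac a).withDensity
            (fun x => ENNReal.ofReal (exp (t * x) / γ))
      + ENNReal.ofReal β • ν
      = ρ.withDensity (fun x => ENNReal.ofReal ((1 - β) / γ * exp (t * x) * f x + β))
        + ENNReal.ofReal ((1 - β) / γ * exp (t * a) * c + β * m) • Measure.dirac a := by
  have hE : Measurable fun x => ENNReal.ofReal (exp (t * x) / γ) := by fun_prop
  have hF : Measurable fun x =>
      ENNReal.ofReal (1 - β) * (ENNReal.ofReal (f x) * ENNReal.ofReal (exp (t * x) / γ)) := by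
    fun_prop
  have hdensity : (fun x => ENNReal.ofReal ((1 - β) / γ * exp (t * x) * f x + β))
      = (fun x =>
          ENNReal.ofReal (1 - β) * (ENNReal.ofReal (f x) * ENNReal.ofReal (exp (t * x) / γ)))
        + fun _ => ENNReal.ofReal β := by
    ext x
    rw [Pi.add_apply, ← ENNReal.ofReal_mul (hf0 x), ← mul_one (ENNReal.ofReal β),
      ← ENNReal.ofReal_one, ofReal_one_sub_mul_add_mul hβ0 hβ1
        (mul_nonneg (hf0 x) (by positivity)) zero_le_one]
    ring_nf
  have hatom : ENNReal.ofReal ((1 - β) / γ * exp (t * a) * c + β * m)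
      = ENNReal.ofReal (1 - β) * (ENNReal.ofReal c * ENNReal.ofReal (exp (t * a) / γ))
        + ENNReal.ofReal β * ENNReal.ofReal m := by
    rw [← ENNReal.ofReal_mul hc, ofReal_one_sub_mul_add_mul hβ0 hβ1 (by positivity) hm]
    ring_nf
  rw [hν, hdensity, withDensity_add_left hF, withDensity_const, hatom, add_smul,
    withDensity_add_measure, withDensity_smul_measure, dirac_withDensity, smul_add, smul_add,
    smul_smul, smul_smul, ← withDensity_mul _ (by fun_prop) hE, ← withDensity_smul _ (by fun_prop),
    mul_assoc, smul_smul]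
  exact add_add_add_comm (G := Measure ℝ) _ _ _ _

section Sequences

variable (β γ a : ℝ) (ν : Measure ℝ)

noncomputable def time (n : ℕ) : ℝ := lenskiTime γ (lenski β γ ν (Measure.dirac a) n)

/- `p_n = density n · ν|_{[0, a)} + atom n · δ_a`, see `Setup.lenski_eq`. -/

noncomputable def density : ℕ → ℝ → ℝ
  | 0 => fun _ => 0
  | n + 1 => fun x => (1 - β) / γ * exp (time β γ a ν n * x) * density n x + β

noncomputable def atom : ℕ → ℝ
  | 0 => 1
  | n + 1 => (1 - β) / γ * exp (time β γ a ν n * a) * atom n + β * (ν {a}).toReal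

noncomputable def limTime : ℝ := ⨆ n, time β γ a ν n

variable {β γ a ν}

theorem lenski_succ (n : ℕ) :
    lenski β γ ν (Measure.dirac a) (n + 1)
      = ENNReal.ofReal (1 - β) • ((lenski β γ ν (Measure.dirac a) n).withDensity
          fun x => ENNReal.ofReal (exp (time β γ a ν n * x) / γ))
        + ENNReal.ofReal β • ν :=
  rfl

theorem continuous_density (n : ℕ) : Continuous (density β γ a ν n) := by
  induction n with
  | zero => exact continuous_const
  | succ n ih => simp only [density]; fun_prop

end Sequences

structure Setup (β γ a : ℝ) (ν : Measure ℝ) : Prop where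
  β_pos : 0 < β
  β_lt_one : β < 1
  one_lt_γ : 1 < γ
  a_pos : 0 < a
  ae_mem_Icc : ∀ᵐ x ∂ν, x ∈ Icc 0 a

namespace Setup

variable {β γ a : ℝ} {ν : Measure ℝ} (h : Setup β γ a ν)
include h

theorem γ_pos : 0 < γ := zero_lt_one.trans h.one_lt_γ

theorem ratio_pos : 0 < (1 - β) / γ := div_pos (by linarith [h.β_lt_one]) h.γ_pos

theorem ratio_lt_one : (1 - β) / γ < 1 := by
  rw [div_lt_one h.γ_pos]
  linarith [h.β_pos, h.one_lt_γ]

theorem ae_le : ∀ᵐ x ∂ν, x ≤ a := h.ae_mem_Icc.mono fun _ hx => hx.2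

theorem ae_restrict_mem_Ico : ∀ᵐ x ∂ν.restrict (Iio a), x ∈ Ico 0 a := by
  filter_upwards [ae_restrict_of_ae h.ae_mem_Icc, ae_restrict_mem measurableSet_Iio] with x hx hxa
  exact ⟨hx.1, hxa⟩

theorem density_nonneg (n : ℕ) (x : ℝ) : 0 ≤ density β γ a ν n x := by
  induction n with
  | zero => exact le_rfl
  | succ n ih =>
    have := h.ratio_pos
    have := h.β_pos
    simp only [density]
    positivity

theorem atom_pos (n : ℕ) : 0 < atom β γ a ν n := by
  induction n with
  | zero => exact one_pos
  | succ n ih =>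
    have := h.ratio_pos
    have := h.β_pos
    simp only [atom]
    positivity

theorem lenski_eq [IsFiniteMeasure ν] (n : ℕ) :
    lenski β γ ν (Measure.dirac a) n
      = (ν.restrict (Iio a)).withDensity (fun x => ENNReal.ofReal (density β γ a ν n x))
        + ENNReal.ofReal (atom β γ a ν n) • Measure.dirac a := by
  induction n with
  | zero => simp [lenski, density, atom]
  | succ n ih =>
    rw [lenski_succ, ih, lenski_step_withDensity_add_dirac (m := (ν {a}).toReal) h.β_pos.le h.β_lt_one.le
      h.γ_pos (continuous_density n).measurable (h.density_nonneg n) (h.atom_pos n).le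
      ENNReal.toReal_nonneg]
    · rfl
    · rw [ENNReal.ofReal_toReal (measure_ne_top ν _), restrict_Iio_add_smul_dirac h.ae_le]

theorem mul_exp_mul_lt_one_of_mem_Icc {s x : ℝ} (hs0 : 0 ≤ s) (hs : s < maxTime β γ a)
    (hx : x ∈ Icc 0 a) : (1 - β) / γ * exp (s * x) < 1 :=
  Lenski.mul_exp_mul_lt_one_of_mem_Icc h.β_lt_one h.γ_pos h.a_pos hs0 hs hx


section Dynamics

variable [IsProbabilityMeasure ν]

theorem ae_mem_Icc_lenski (n : ℕ) : ∀ᵐ x ∂(lenski β γ ν (Measure.dirac a) n), x ∈ Icc 0 a := by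
  rw [h.lenski_eq]
  exact ae_mem_withDensity_add_smul_dirac measurableSet_Icc
    (ae_restrict_of_ae h.ae_mem_Icc) ⟨h.a_pos.le, le_rfl⟩ _ _

theorem lenski_singleton (n : ℕ) :
    lenski β γ ν (Measure.dirac a) n {a} = ENNReal.ofReal (atom β γ a ν n) := by
  rw [h.lenski_eq, Measure.add_apply, withDensity_apply _ (measurableSet_singleton a),
    Measure.restrict_eq_zero.2 (by simp), lintegral_zero_measure]
  simp

theorem isProbabilityMeasure_lenski (n : ℕ) :
    IsProbabilityMeasure (lenski β γ ν (Measure.dirac a) n) := by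
  induction n with
  | zero => exact Measure.dirac.isProbabilityMeasure
  | succ n ih =>
    obtain ⟨-, hγ⟩ := lenskiTime_pos_and_integral_eq (h.ae_mem_Icc_lenski n) h.a_pos
      (by simp [h.lenski_singleton, h.atom_pos]) h.one_lt_γ
    have hmass : ∫⁻ x, ENNReal.ofReal (exp (time β γ a ν n * x) / γ)
        ∂(lenski β γ ν (Measure.dirac a) n) = 1 := by
      rw [← ofReal_integral_eq_lintegral_ofReal
          ((integrable_exp_mul_of_ae_mem_Icc (h.ae_mem_Icc_lenski n) _).div_const γ)
          (ae_of_all _ fun _ => div_nonneg (exp_pos _).le h.γ_pos.le),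
        integral_div, time, hγ, div_self h.γ_pos.ne', ENNReal.ofReal_one]
    constructor
    rw [lenski_succ, Measure.add_apply, Measure.smul_apply, Measure.smul_apply,
      withDensity_apply _ MeasurableSet.univ, Measure.restrict_univ, hmass, measure_univ,
      smul_eq_mul, smul_eq_mul, mul_one, mul_one,
      ← ENNReal.ofReal_add (by linarith [h.β_lt_one]) h.β_pos.le]
    norm_num

theorem lenski_singleton_ne_zero (n : ℕ) : lenski β γ ν (Measure.dirac a) n {a} ≠ 0 := by
  simp [h.lenski_singleton, h.atom_pos]

theorem time_pos_and_integral_eq (n : ℕ) :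
    0 < time β γ a ν n ∧ ∫ x, exp (time β γ a ν n * x) ∂(lenski β γ ν (Measure.dirac a) n) = γ :=
  haveI := h.isProbabilityMeasure_lenski n
  lenskiTime_pos_and_integral_eq (h.ae_mem_Icc_lenski n) h.a_pos (h.lenski_singleton_ne_zero n)
    h.one_lt_γ

theorem strictMono_integral_exp_mul_lenski (n : ℕ) :
    StrictMono fun t => ∫ x, exp (t * x) ∂(lenski β γ ν (Measure.dirac a) n) :=
  haveI := h.isProbabilityMeasure_lenski n
  strictMono_integral_exp_mul (h.ae_mem_Icc_lenski n) h.a_pos (h.lenski_singleton_ne_zero n)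

theorem integral_lenski (n : ℕ) {g : ℝ → ℝ} (hg : Continuous g) :
    ∫ x, g x ∂(lenski β γ ν (Measure.dirac a) n)
      = ∫ x, density β γ a ν n x * g x ∂(ν.restrict (Iio a)) + atom β γ a ν n * g a := by
  rw [h.lenski_eq]
  exact integral_withDensity_add_smul_dirac (ae_restrict_of_ae h.ae_mem_Icc)
    (continuous_density n) (h.density_nonneg n) (h.atom_pos n).le hg

theorem integral_density_add_atom (n : ℕ) :
    ∫ x, density β γ a ν n x ∂(ν.restrict (Iio a)) + atom β γ a ν n = 1 := by
  have := h.isProbabilityMeasure_lenski n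
  simpa using (h.integral_lenski n (g := fun _ => 1) continuous_const).symm

theorem integrable_restrict_Iio {g : ℝ → ℝ} (hg : Continuous g) :
    Integrable g (ν.restrict (Iio a)) :=
  integrable_of_continuousOn_of_ae_mem isCompact_Icc (ae_restrict_of_ae h.ae_mem_Icc)
    hg.continuousOn

theorem integrable_density (n : ℕ) : Integrable (density β γ a ν n) (ν.restrict (Iio a)) :=
  h.integrable_restrict_Iio (continuous_density n)

/-- Moving mass from the atom at `a` down into `[0, a)` can only lower `∫ e^{t x} dp`. -/
theorem time_le_time_succ_of_density_le {n : ℕ}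
    (hle : ∀ x ∈ Icc 0 a, density β γ a ν n x ≤ density β γ a ν (n + 1) x) :
    time β γ a ν n ≤ time β γ a ν (n + 1) := by
  set t := time β γ a ν n
  set f := density β γ a ν n
  set f' := density β γ a ν (n + 1)
  obtain ⟨ht, hγ⟩ := h.time_pos_and_integral_eq n
  have hf := continuous_density (β := β) (γ := γ) (a := a) (ν := ν) n
  have hf' := continuous_density (β := β) (γ := γ) (a := a) (ν := ν) (n + 1)
  have hpt : ∀ᵐ x ∂ν.restrict (Iio a),
      f' x * exp (t * x) ≤ f x * exp (t * x) + exp (t * a) * (f' x - f x) := by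
    filter_upwards [ae_restrict_of_ae h.ae_mem_Icc] with x hx
    have hexp : exp (t * x) ≤ exp (t * a) := exp_le_exp.2 (by nlinarith [hx.2])
    nlinarith [hle x hx, exp_pos (t * x)]
  have hint := integral_mono_ae (h.integrable_restrict_Iio (by fun_prop))
    (h.integrable_restrict_Iio (by fun_prop)) hpt
  rw [integral_add (h.integrable_restrict_Iio (by fun_prop))
      (h.integrable_restrict_Iio (by fun_prop)), integral_const_mul,
    integral_sub (h.integrable_density (n + 1)) (h.integrable_density n)] at hint
  have hmass := h.integral_density_add_atom n
  have hmass' := h.integral_density_add_atom (n + 1)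
  have hγn := h.integral_lenski n (g := fun x => exp (t * x)) (by fun_prop)
  rw [hγ] at hγn
  have hγ' : ∫ x, exp (t * x) ∂(lenski β γ ν (Measure.dirac a) (n + 1))
      ≤ ∫ x, exp (time β γ a ν (n + 1) * x) ∂(lenski β γ ν (Measure.dirac a) (n + 1)) := by
    rw [(h.time_pos_and_integral_eq (n + 1)).2, h.integral_lenski (n + 1) (by fun_prop)]
    nlinarith [exp_pos (t * a)]
  exact (h.strictMono_integral_exp_mul_lenski (n + 1)).le_iff_le.1 hγ'

theorem density_add_le_density_succ_and_time_le_time_succ (n : ℕ) :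
    (∀ x, 0 ≤ x →
      density β γ a ν n x + β * ((1 - β) / γ) ^ n ≤ density β γ a ν (n + 1) x)
    ∧ time β γ a ν n ≤ time β γ a ν (n + 1) := by
  have hr := h.ratio_pos
  have hβ := h.β_pos
  have htime : ∀ n, (∀ x, 0 ≤ x →
      density β γ a ν n x + β * ((1 - β) / γ) ^ n ≤ density β γ a ν (n + 1) x) →
      time β γ a ν n ≤ time β γ a ν (n + 1) := fun n hn =>
    h.time_le_time_succ_of_density_le fun x hx => by nlinarith [hn x hx.1, pow_pos hr n]
  induction n with
  | zero =>
    have hdens : ∀ x, 0 ≤ x →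
        density β γ a ν 0 x + β * ((1 - β) / γ) ^ 0 ≤ density β γ a ν 1 x := by
      intro x _
      simp [density]
    exact ⟨hdens, htime 0 hdens⟩
  | succ n ih =>
    obtain ⟨hdens, htime_le⟩ := ih
    have hdens' : ∀ x, 0 ≤ x → density β γ a ν (n + 1) x + β * ((1 - β) / γ) ^ (n + 1)
        ≤ density β γ a ν (n + 2) x := by
      intro x hx
      set e := exp (time β γ a ν n * x)
      set e' := exp (time β γ a ν (n + 1) * x)
      have he : e ≤ e' := exp_le_exp.2 (mul_le_mul_of_nonneg_right htime_le hx)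
      have he1 : 1 ≤ e := one_le_exp (mul_nonneg (h.time_pos_and_integral_eq n).1.le hx)
      have hf := h.density_nonneg (n + 1) x
      have hstep := hdens x hx
      have hrec : density β γ a ν (n + 1) x = (1 - β) / γ * e * density β γ a ν n x + β := rfl
      show _ ≤ (1 - β) / γ * e' * density β γ a ν (n + 1) x + β
      have hexp_mul : e * density β γ a ν (n + 1) x ≤ e' * density β γ a ν (n + 1) x :=
        mul_le_mul_of_nonneg_right he hf
      have hgap : β * ((1 - β) / γ) ^ n ≤ density β γ a ν (n + 1) x - density β γ a ν n x := by
        linarith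
      have hgap_exp : β * ((1 - β) / γ) ^ n ≤ e * (density β γ a ν (n + 1) x - density β γ a ν n x) :=
        hgap.trans (le_mul_of_one_le_left ((by positivity : (0 : ℝ) ≤ _).trans hgap) he1)
      have hgrowth : β * ((1 - β) / γ) ^ n
          ≤ e' * density β γ a ν (n + 1) x - e * density β γ a ν n x := by linarith
      rw [pow_succ]
      nlinarith [mul_le_mul_of_nonneg_left hgrowth hr.le]
    exact ⟨hdens', htime (n + 1) hdens'⟩

theorem monotone_time : Monotone (time β γ a ν) :=
  monotone_nat_of_le_succ fun n => (h.density_add_le_density_succ_and_time_le_time_succ n).2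

theorem monotone_density {x : ℝ} (hx : 0 ≤ x) : Monotone fun n => density β γ a ν n x :=
  monotone_nat_of_le_succ fun n => by
    have := (h.density_add_le_density_succ_and_time_le_time_succ n).1 x hx
    nlinarith [pow_pos h.ratio_pos n, h.β_pos]

theorem toReal_restrict_Iio_univ_add_singleton :
    (ν.restrict (Iio a) univ).toReal + (ν {a}).toReal = 1 := by
  have := congrArg (fun μ : Measure ℝ => (μ univ).toReal) (restrict_Iio_add_smul_dirac h.ae_le)
  simpa [ENNReal.toReal_add (measure_ne_top _ _) (measure_ne_top _ _)] using this

/-- Otherwise the atom at `a` would not shrink on day `n` while the density on `[0, a)` grows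
by `β ((1 - β) / γ)^n`, contradicting conservation of mass. -/
theorem mul_exp_time_mul_lt_one (n : ℕ) : (1 - β) / γ * exp (time β γ a ν n * a) < 1 := by
  by_contra! hge
  have hr := h.ratio_pos
  have hβ := h.β_pos
  have hinc : ∫ x, density β γ a ν n x ∂ν.restrict (Iio a)
        + β * ((1 - β) / γ) ^ n * (ν.restrict (Iio a) univ).toReal
      ≤ ∫ x, density β γ a ν (n + 1) x ∂ν.restrict (Iio a) := by
    have hint : Integrable (fun x => density β γ a ν n x + β * ((1 - β) / γ) ^ n)
        (ν.restrict (Iio a)) := (h.integrable_density n).add (integrable_const _)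
    have := integral_mono_ae hint (h.integrable_density (n + 1))
      (by filter_upwards [h.ae_restrict_mem_Ico] with x hx using
            (h.density_add_le_density_succ_and_time_le_time_succ n).1 x hx.1)
    rwa [integral_add (h.integrable_density n) (integrable_const _),
      integral_const, smul_eq_mul, measureReal_def, mul_comm (ν.restrict (Iio a) univ).toReal]
      at this
  have hatom : atom β γ a ν n + β * (ν {a}).toReal ≤ atom β γ a ν (n + 1) := by
    show _ ≤ (1 - β) / γ * exp (time β γ a ν n * a) * atom β γ a ν n + β * (ν {a}).toReal
    nlinarith [h.atom_pos n]
  have hmass := h.integral_density_add_atom n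
  have hmass' := h.integral_density_add_atom (n + 1)
  have hsplit := h.toReal_restrict_Iio_univ_add_singleton
  have hrn : ((1 - β) / γ) ^ n * (ν {a}).toReal ≤ (ν {a}).toReal :=
    mul_le_of_le_one_left ENNReal.toReal_nonneg (pow_le_one₀ hr.le h.ratio_lt_one.le)
  nlinarith [mul_pos hβ (pow_pos hr n)]

theorem time_lt_maxTime (n : ℕ) : time β γ a ν n < maxTime β γ a := by
  have hlt := (h.mul_exp_time_mul_lt_one n).trans_eq
    (mul_exp_maxTime_mul h.β_lt_one h.γ_pos h.a_pos).symm
  exact lt_of_mul_lt_mul_right (exp_lt_exp.1 (lt_of_mul_lt_mul_left hlt h.ratio_pos.le))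
    h.a_pos.le

theorem bddAbove_range_time : BddAbove (range (time β γ a ν)) :=
  ⟨maxTime β γ a, by rintro _ ⟨n, rfl⟩; exact (h.time_lt_maxTime n).le⟩

theorem tendsto_time : Tendsto (time β γ a ν) atTop (𝓝 (limTime β γ a ν)) :=
  tendsto_atTop_ciSup h.monotone_time h.bddAbove_range_time

theorem time_le_limTime (n : ℕ) : time β γ a ν n ≤ limTime β γ a ν :=
  le_ciSup h.bddAbove_range_time n

theorem limTime_pos : 0 < limTime β γ a ν :=
  (h.time_pos_and_integral_eq 0).1.trans_le (h.time_le_limTime 0)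

theorem limTime_le_maxTime : limTime β γ a ν ≤ maxTime β γ a :=
  ciSup_le fun n => (h.time_lt_maxTime n).le

theorem mul_exp_limTime_mul_lt_one {x : ℝ} (hx : x ∈ Ico 0 a) :
    (1 - β) / γ * exp (limTime β γ a ν * x) < 1 :=
  mul_exp_lt_one h.β_lt_one h.γ_pos h.a_pos <|
    calc limTime β γ a ν * x ≤ maxTime β γ a * x :=
          mul_le_mul_of_nonneg_right h.limTime_le_maxTime hx.1
      _ < maxTime β γ a * a :=
          mul_lt_mul_of_pos_left hx.2 (maxTime_pos h.β_pos h.β_lt_one h.one_lt_γ h.a_pos)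

theorem density_le_stationaryDensity (n : ℕ) {x : ℝ} (hx : x ∈ Ico 0 a) :
    density β γ a ν n x ≤ stationaryDensity β γ (limTime β γ a ν) x := by
  have hlt := h.mul_exp_limTime_mul_lt_one hx
  induction n with
  | zero => exact (stationaryDensity_pos h.β_pos hlt).le
  | succ n ih =>
    have hexp : (1 - β) / γ * exp (time β γ a ν n * x)
        ≤ (1 - β) / γ * exp (limTime β γ a ν * x) :=
      mul_le_mul_of_nonneg_left
        (exp_le_exp.2 (mul_le_mul_of_nonneg_right (h.time_le_limTime n) hx.1)) h.ratio_pos.le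
    rw [stationaryDensity_eq_mul_add hlt.ne]
    show (1 - β) / γ * exp (time β γ a ν n * x) * density β γ a ν n x + β ≤ _
    gcongr
    · exact h.density_nonneg n x
    · exact (mul_pos h.ratio_pos (exp_pos _)).le

theorem tendsto_density {x : ℝ} (hx : x ∈ Ico 0 a) :
    Tendsto (fun n => density β γ a ν n x) atTop
      (𝓝 (stationaryDensity β γ (limTime β γ a ν) x)) := by
  obtain ⟨ℓ, hℓ⟩ : ∃ ℓ, Tendsto (fun n => density β γ a ν n x) atTop (𝓝 ℓ) :=
    ⟨_, tendsto_atTop_ciSup (h.monotone_density hx.1)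
      ⟨_, by rintro _ ⟨n, rfl⟩; exact h.density_le_stationaryDensity n hx⟩⟩
  have hrec : Tendsto (fun n => density β γ a ν (n + 1) x) atTop
      (𝓝 ((1 - β) / γ * exp (limTime β γ a ν * x) * ℓ + β)) :=
    ((((h.tendsto_time.mul_const x).rexp).const_mul _).mul hℓ).add_const β
  have hfix := tendsto_nhds_unique (hℓ.comp (tendsto_add_atTop_nat 1)) hrec
  have hlt := h.mul_exp_limTime_mul_lt_one hx
  convert hℓ
  unfold stationaryDensity
  rw [div_eq_iff (by linarith)]
  linarith

theorem integral_density_le_one (n : ℕ) :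
    ∫ x, density β γ a ν n x ∂ν.restrict (Iio a) ≤ 1 := by
  linarith [h.integral_density_add_atom n, h.atom_pos n]

theorem lintegral_stationaryDensity_limTime :
    ∫⁻ x, ENNReal.ofReal (stationaryDensity β γ (limTime β γ a ν) x) ∂ν.restrict (Iio a)
      = ⨆ n, ENNReal.ofReal (∫ x, density β γ a ν n x ∂ν.restrict (Iio a)) := by
  have hmono : ∀ᵐ x ∂ν.restrict (Iio a),
      Monotone fun n => ENNReal.ofReal (density β γ a ν n x) := by
    filter_upwards [h.ae_restrict_mem_Ico] with x hx
    exact fun m n hmn => ENNReal.ofReal_le_ofReal (h.monotone_density hx.1 hmn)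
  have hlim : ∀ᵐ x ∂ν.restrict (Iio a),
      ⨆ n, ENNReal.ofReal (density β γ a ν n x)
        = ENNReal.ofReal (stationaryDensity β γ (limTime β γ a ν) x) := by
    filter_upwards [h.ae_restrict_mem_Ico, hmono] with x hx hxmono
    exact iSup_eq_of_tendsto hxmono (ENNReal.tendsto_ofReal (h.tendsto_density hx))
  rw [← lintegral_congr_ae hlim, lintegral_iSup'
    (fun n => (continuous_density n).measurable.ennreal_ofReal.aemeasurable) hmono]
  congr with n
  exact (ofReal_integral_eq_lintegral_ofReal (h.integrable_density n)
    (ae_of_all _ (h.density_nonneg n))).symm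

theorem integrable_stationaryDensity_limTime :
    Integrable (stationaryDensity β γ (limTime β γ a ν)) (ν.restrict (Iio a)) := by
  have hfin : ∫⁻ x, ENNReal.ofReal (stationaryDensity β γ (limTime β γ a ν) x)
      ∂ν.restrict (Iio a) ≠ ∞ := by
    rw [h.lintegral_stationaryDensity_limTime]
    exact ne_top_of_le_ne_top ENNReal.one_ne_top
      (iSup_le fun n => ENNReal.ofReal_le_one.2 (h.integral_density_le_one n))
  refine (integrable_toReal_of_lintegral_ne_top
    (measurable_stationaryDensity _).ennreal_ofReal.aemeasurable hfin).congr ?_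
  filter_upwards [h.ae_restrict_mem_Ico] with x hx
  exact ENNReal.toReal_ofReal (stationaryDensity_pos h.β_pos (h.mul_exp_limTime_mul_lt_one hx)).le

theorem tendsto_integral_density :
    Tendsto (fun n => ∫ x, density β γ a ν n x ∂ν.restrict (Iio a)) atTop
      (𝓝 (∫ x, stationaryDensity β γ (limTime β γ a ν) x ∂ν.restrict (Iio a))) :=
  integral_tendsto_of_tendsto_of_monotone h.integrable_density
    h.integrable_stationaryDensity_limTime
    (by filter_upwards [h.ae_restrict_mem_Ico] with x hx using h.monotone_density hx.1)
    (by filter_upwards [h.ae_restrict_mem_Ico] with x hx using h.tendsto_density hx)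

theorem integral_stationaryDensity_limTime_le_one :
    ∫ x, stationaryDensity β γ (limTime β γ a ν) x ∂ν.restrict (Iio a) ≤ 1 :=
  le_of_tendsto' h.tendsto_integral_density h.integral_density_le_one

theorem tendsto_atom :
    Tendsto (atom β γ a ν) atTop
      (𝓝 (1 - ∫ x, stationaryDensity β γ (limTime β γ a ν) x ∂ν.restrict (Iio a))) := by
  have := (tendsto_const_nhds (x := (1 : ℝ))).sub h.tendsto_integral_density
  refine this.congr fun n => ?_
  linarith [h.integral_density_add_atom n]

theorem one_sub_integral_stationaryDensity_limTime_eq_mul_add :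
    1 - ∫ x, stationaryDensity β γ (limTime β γ a ν) x ∂ν.restrict (Iio a)
      = (1 - β) / γ * exp (limTime β γ a ν * a)
          * (1 - ∫ x, stationaryDensity β γ (limTime β γ a ν) x ∂ν.restrict (Iio a))
        + β * (ν {a}).toReal :=
  tendsto_nhds_unique (h.tendsto_atom.comp (tendsto_add_atTop_nat 1))
    ((((h.tendsto_time.mul_const a).rexp.const_mul _).mul h.tendsto_atom).add_const _)

theorem tendstoTV_lenski :
    TendstoTV (lenski β γ ν (Measure.dirac a))
      ((ν.restrict (Iio a)).withDensity
          (fun x => ENNReal.ofReal (stationaryDensity β γ (limTime β γ a ν) x))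
        + ENNReal.ofReal (1 - ∫ x, stationaryDensity β γ (limTime β γ a ν) x ∂ν.restrict (Iio a))
          • Measure.dirac a) := by
  rw [show lenski β γ ν (Measure.dirac a) = _ from funext h.lenski_eq]
  exact tendstoTV_withDensity_add_smul h.integrable_density h.integrable_stationaryDensity_limTime
    (fun n => ae_of_all _ (h.density_nonneg n))
    (fun n => by filter_upwards [h.ae_restrict_mem_Ico] with x hx using
      h.density_le_stationaryDensity n hx)
    h.tendsto_integral_density (fun n => (h.atom_pos n).le) h.tendsto_atom


end Dynamics

theorem lintegral_criticalDensity :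
    ∫⁻ x, criticalDensity β γ a x ∂ν
      = ∫⁻ x, ENNReal.ofReal (stationaryDensity β γ (maxTime β γ a) x) ∂ν.restrict (Iio a)
        + ν {a} * ∞ := by
  rw [lintegral_eq_restrict_Iio_add h.ae_le, criticalDensity_self h.β_pos h.a_pos.ne']
  congr 1
  refine lintegral_congr_ae ?_
  filter_upwards [h.ae_restrict_mem_Ico] with x hx
  exact criticalDensity_of_lt h.β_pos h.β_lt_one h.one_lt_γ h.a_pos hx.2

theorem ae_stationaryDensity_nonneg {s : ℝ} (hs0 : 0 ≤ s) (hs : s < maxTime β γ a) :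
    0 ≤ᵐ[ν] stationaryDensity β γ s := by
  filter_upwards [h.ae_mem_Icc] with x hx
  exact (stationaryDensity_pos h.β_pos (h.mul_exp_mul_lt_one_of_mem_Icc hs0 hs hx)).le

theorem measure_singleton_eq_zero_of_le_one (h1 : ∫⁻ x, criticalDensity β γ a x ∂ν ≤ 1) :
    ν {a} = 0 := by
  by_contra hne
  rw [h.lintegral_criticalDensity, ENNReal.mul_top hne, add_top] at h1
  exact absurd h1 (by simp)

section Limit

variable [IsProbabilityMeasure ν]

theorem ae_stationaryDensity_limTime_nonneg :
    0 ≤ᵐ[ν.restrict (Iio a)] stationaryDensity β γ (limTime β γ a ν) := by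
  filter_upwards [h.ae_restrict_mem_Ico] with x hx
  exact (stationaryDensity_pos h.β_pos (h.mul_exp_limTime_mul_lt_one hx)).le

theorem integral_stationaryDensity_limTime_nonneg :
    0 ≤ ∫ x, stationaryDensity β γ (limTime β γ a ν) x ∂ν.restrict (Iio a) :=
  integral_nonneg_of_ae h.ae_stationaryDensity_limTime_nonneg

theorem integrable_stationaryDensity {s : ℝ} (hs0 : 0 ≤ s) (hs : s < maxTime β γ a) :
    Integrable (stationaryDensity β γ s) ν :=
  integrable_of_continuousOn_of_ae_mem isCompact_Icc h.ae_mem_Icc fun x hx =>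
    (show ContinuousAt (fun x => β / (1 - (1 - β) / γ * exp (s * x))) x from
      continuousAt_const.div (by fun_prop)
        (sub_pos.2 (h.mul_exp_mul_lt_one_of_mem_Icc hs0 hs hx)).ne').continuousWithinAt

theorem integral_stationaryDensity_lt_of_measure_Ioc_pos (hpos : 0 < ν (Ioc 0 a)) {s s' : ℝ}
    (hs0 : 0 ≤ s) (hss' : s < s') (hs' : s' < maxTime β γ a) :
    ∫ x, stationaryDensity β γ s x ∂ν < ∫ x, stationaryDensity β γ s' x ∂ν := by
  have hs0' : 0 ≤ s' := hs0.trans hss'.le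
  have hi := h.integrable_stationaryDensity hs0 (hss'.trans hs')
  have hi' := h.integrable_stationaryDensity hs0' hs'
  have hnn : 0 ≤ᵐ[ν] fun x => stationaryDensity β γ s' x - stationaryDensity β γ s x := by
    filter_upwards [h.ae_mem_Icc] with x hx
    exact sub_nonneg.2 (stationaryDensity_le_stationaryDensity h.β_pos h.β_lt_one h.γ_pos
      (mul_le_mul_of_nonneg_right hss'.le hx.1) (h.mul_exp_mul_lt_one_of_mem_Icc hs0' hs' hx))
  have hsupp : Ioc 0 a ⊆ Function.support
      fun x => stationaryDensity β γ s' x - stationaryDensity β γ s x := fun x hx =>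
    sub_ne_zero.2 (stationaryDensity_lt_stationaryDensity h.β_pos h.β_lt_one h.γ_pos
      (mul_lt_mul_of_pos_right hss' hx.1)
      (h.mul_exp_mul_lt_one_of_mem_Icc hs0' hs' (Ioc_subset_Icc_self hx))).ne'
  have hpos' := (integral_pos_iff_support_of_nonneg_ae hnn (hi'.sub hi)).2
    (hpos.trans_le (measure_mono hsupp))
  rw [integral_sub hi' hi] at hpos'
  linarith

theorem integral_stationaryDensity_of_measure_Ioc_eq_zero (h0 : ν (Ioc 0 a) = 0) (s : ℝ) :
    ∫ x, stationaryDensity β γ s x ∂ν = stationaryDensity β γ s 0 := by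
  have hae : ∀ᵐ x ∂ν, x = 0 := by
    filter_upwards [h.ae_mem_Icc, measure_eq_zero_iff_ae_notMem.1 h0] with x hx hx'
    exact le_antisymm (not_lt.1 fun hpos => hx' ⟨hpos, hx.2⟩) hx.1
  have hconst : stationaryDensity β γ s =ᵐ[ν] fun _ => stationaryDensity β γ s 0 :=
    hae.mono fun x hx => by rw [hx]
  rw [integral_congr_ae hconst, integral_const]
  simp

theorem one_lt_integral_stationaryDensity {s s' : ℝ}
    (h1 : ∫ x, stationaryDensity β γ s x ∂ν = 1) (hs0 : 0 ≤ s) (hss' : s < s')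
    (hs' : s' < maxTime β γ a) : 1 < ∫ x, stationaryDensity β γ s' x ∂ν := by
  rcases eq_zero_or_pos (ν (Ioc 0 a)) with h0 | hpos
  · rw [h.integral_stationaryDensity_of_measure_Ioc_eq_zero h0] at h1
    exact absurd h1 (stationaryDensity_zero_lt_one h.β_pos.le h.β_lt_one h.one_lt_γ s).ne
  · exact h1 ▸ h.integral_stationaryDensity_lt_of_measure_Ioc_pos hpos hs0 hss' hs'

theorem one_sub_integral_stationaryDensity_limTime_eq_mul (hlt : limTime β γ a ν < maxTime β γ a) :
    1 - ∫ x, stationaryDensity β γ (limTime β γ a ν) x ∂ν.restrict (Iio a)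
      = (ν {a}).toReal * stationaryDensity β γ (limTime β γ a ν) a := by
  have hfix := h.one_sub_integral_stationaryDensity_limTime_eq_mul_add
  have hu := h.mul_exp_mul_lt_one_of_mem_Icc h.limTime_pos.le hlt ⟨h.a_pos.le, le_rfl⟩
  set I := ∫ x, stationaryDensity β γ (limTime β γ a ν) x ∂ν.restrict (Iio a)
  rw [stationaryDensity, mul_div_assoc', eq_div_iff (by linarith)]
  linarith

theorem integral_stationaryDensity_limTime (hlt : limTime β γ a ν < maxTime β γ a) :
    ∫ x, stationaryDensity β γ (limTime β γ a ν) x ∂ν = 1 := by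
  rw [integral_eq_restrict_Iio_add h.ae_le (h.integrable_stationaryDensity h.limTime_pos.le hlt),
    ← h.one_sub_integral_stationaryDensity_limTime_eq_mul hlt]
  ring

theorem withDensity_stationaryDensity_limTime (hlt : limTime β γ a ν < maxTime β γ a) :
    ν.withDensity (fun x => ENNReal.ofReal (stationaryDensity β γ (limTime β γ a ν) x))
      = (ν.restrict (Iio a)).withDensity
          (fun x => ENNReal.ofReal (stationaryDensity β γ (limTime β γ a ν) x))
        + ENNReal.ofReal (1 - ∫ x, stationaryDensity β γ (limTime β γ a ν) x ∂ν.restrict (Iio a))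
          • Measure.dirac a := by
  rw [withDensity_eq_restrict_Iio_add h.ae_le,
    h.one_sub_integral_stationaryDensity_limTime_eq_mul hlt, ENNReal.ofReal_mul ENNReal.toReal_nonneg, ENNReal.ofReal_toReal (measure_ne_top ν _)]

theorem lintegral_criticalDensity_of_limTime_eq (hT : limTime β γ a ν = maxTime β γ a)
    (h0 : ν {a} = 0) :
    ∫⁻ x, criticalDensity β γ a x ∂ν
      = ENNReal.ofReal (∫ x, stationaryDensity β γ (limTime β γ a ν) x ∂ν.restrict (Iio a)) := by
  rw [h.lintegral_criticalDensity, h0, zero_mul, add_zero, ← hT,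
    ofReal_integral_eq_lintegral_ofReal h.integrable_stationaryDensity_limTime
      h.ae_stationaryDensity_limTime_nonneg]

theorem limTime_lt_maxTime_of_one_lt (h1 : 1 < ∫⁻ x, criticalDensity β γ a x ∂ν) :
    limTime β γ a ν < maxTime β γ a := by
  refine h.limTime_le_maxTime.lt_of_ne fun hT => h1.not_ge ?_
  have h0 : ν {a} = 0 := by
    have hfix := h.one_sub_integral_stationaryDensity_limTime_eq_mul_add
    rw [hT, mul_exp_maxTime_mul h.β_lt_one h.γ_pos h.a_pos, one_mul] at hfix
    have : (ν {a}).toReal = 0 := by nlinarith [h.β_pos, ENNReal.toReal_nonneg (a := ν {a})]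
    exact ((ENNReal.toReal_eq_zero_iff _).1 this).resolve_right (measure_ne_top _ _)
  rw [h.lintegral_criticalDensity_of_limTime_eq hT h0]
  exact ENNReal.ofReal_le_one.2 h.integral_stationaryDensity_limTime_le_one

theorem limTime_eq_maxTime_of_le_one (h1 : ∫⁻ x, criticalDensity β γ a x ∂ν ≤ 1) :
    limTime β γ a ν = maxTime β γ a := by
  refine h.limTime_le_maxTime.eq_of_not_lt fun hlt => ?_
  obtain ⟨s, hTs, hs⟩ := exists_between hlt
  have hs0 : 0 ≤ s := h.limTime_pos.le.trans hTs.le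
  have hgt := h.one_lt_integral_stationaryDensity (h.integral_stationaryDensity_limTime hlt)
    h.limTime_pos.le hTs hs
  have hle : ENNReal.ofReal (∫ x, stationaryDensity β γ s x ∂ν) ≤ 1 := by
    rw [ofReal_integral_eq_lintegral_ofReal (h.integrable_stationaryDensity hs0 hs)
      (h.ae_stationaryDensity_nonneg hs0 hs)]
    refine (lintegral_mono_ae ?_).trans h1
    filter_upwards [h.ae_mem_Icc] with x hx
    exact ofReal_stationaryDensity_le_criticalDensity h.β_pos h.β_lt_one h.one_lt_γ h.a_pos
      hs.le hx
  linarith [ENNReal.ofReal_le_one.1 hle]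

theorem withDensity_criticalDensity_add (h1 : ∫⁻ x, criticalDensity β γ a x ∂ν ≤ 1) :
    ν.withDensity (criticalDensity β γ a)
        + (1 - ∫⁻ x, criticalDensity β γ a x ∂ν) • Measure.dirac a
      = (ν.restrict (Iio a)).withDensity
          (fun x => ENNReal.ofReal (stationaryDensity β γ (limTime β γ a ν) x))
        + ENNReal.ofReal (1 - ∫ x, stationaryDensity β γ (limTime β γ a ν) x ∂ν.restrict (Iio a))
          • Measure.dirac a := by
  have h0 := h.measure_singleton_eq_zero_of_le_one h1
  have hT := h.limTime_eq_maxTime_of_le_one h1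
  rw [h.lintegral_criticalDensity_of_limTime_eq hT h0, withDensity_eq_restrict_Iio_add h.ae_le, h0,
    zero_mul, zero_smul, add_zero,
    ENNReal.ofReal_sub _ h.integral_stationaryDensity_limTime_nonneg, ENNReal.ofReal_one]
  congr 1
  refine withDensity_congr_ae ?_
  filter_upwards [h.ae_restrict_mem_Ico] with x hx
  rw [criticalDensity_of_lt h.β_pos h.β_lt_one h.one_lt_γ h.a_pos hx.2, hT]

theorem eq_of_integral_stationaryDensity_eq_one {s s' : ℝ} (hs : s ∈ Ioo 0 (maxTime β γ a))
    (hs' : s' ∈ Ioo 0 (maxTime β γ a)) (h1 : ∫ x, stationaryDensity β γ s x ∂ν = 1)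
    (h1' : ∫ x, stationaryDensity β γ s' x ∂ν = 1) : s' = s := by
  rcases lt_trichotomy s' s with hlt | heq | hgt
  · exact absurd (h.one_lt_integral_stationaryDensity h1' hs'.1.le hlt hs.2) h1.not_gt
  · exact heq
  · exact absurd (h.one_lt_integral_stationaryDensity h1 hs.1.le hgt hs'.2) h1'.not_gt

end Limit

end Setup

end Lenski

theorem isProbabilityMeasure_trunc (a : ℝ) (q : Measure ℝ) [IsProbabilityMeasure q] :
    IsProbabilityMeasure (trunc a q) :=
  Measure.isProbabilityMeasure_map (by fun_prop : Measurable fun x : ℝ => min x a).aemeasurable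

theorem ae_mem_Icc_trunc {a : ℝ} {q : Measure ℝ} (ha : 0 ≤ a) (hq : ∀ᵐ x ∂q, 0 ≤ x) :
    ∀ᵐ x ∂(trunc a q), x ∈ Icc 0 a := by
  refine (ae_map_iff (by fun_prop : Measurable fun x : ℝ => min x a).aemeasurable
    measurableSet_Icc).2 ?_
  filter_upwards [hq] with x hx using ⟨le_min hx ha, min_le_right _ _⟩

theorem stmt15_general (M : ℝ) (β : ℝ) (hβ : β ∈ Set.Ioo (0:ℝ) 1) (γ : ℝ) (hγ : 1 < γ)
    (q : MeasureTheory.Measure ℝ) [IsProbabilityMeasure q]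
    (hq : q ((Set.Icc 0 M)ᶜ) = 0)
    (a : ℝ) (ha0 : 0 < a) :
    ((1 < ∫⁻ x, ENNReal.ofReal β *
          (ENNReal.ofReal (1 - ((1 - β) / γ) ^ (1 - x / a)))⁻¹ ∂(trunc a q)) →
      ∃ s : ℝ, s ∈ Set.Ioo 0 (a⁻¹ * Real.log (γ / (1 - β))) ∧
        (∫ x, β / (1 - (1 - β) / γ * Real.exp (s * x)) ∂(trunc a q)) = 1 ∧
        (∀ s' : ℝ, s' ∈ Set.Ioo 0 (a⁻¹ * Real.log (γ / (1 - β))) →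
          (∫ x, β / (1 - (1 - β) / γ * Real.exp (s' * x)) ∂(trunc a q)) = 1 → s' = s) ∧
        TendstoTV (lenski β γ (trunc a q) (MeasureTheory.Measure.dirac a))
          ((trunc a q).withDensity fun x =>
            ENNReal.ofReal (β / (1 - (1 - β) / γ * Real.exp (s * x))))) ∧
    ((∫⁻ x, ENNReal.ofReal β *
          (ENNReal.ofReal (1 - ((1 - β) / γ) ^ (1 - x / a)))⁻¹ ∂(trunc a q) ≤ 1) →
      TendstoTV (lenski β γ (trunc a q) (MeasureTheory.Measure.dirac a))
        ((trunc a q).withDensity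
            (fun x => ENNReal.ofReal β *
              (ENNReal.ofReal (1 - ((1 - β) / γ) ^ (1 - x / a)))⁻¹)
          + (1 - ∫⁻ y, ENNReal.ofReal β *
                (ENNReal.ofReal (1 - ((1 - β) / γ) ^ (1 - y / a)))⁻¹ ∂(trunc a q)) •
              MeasureTheory.Measure.dirac a)) := by
  have := isProbabilityMeasure_trunc a q
  have h : Lenski.Setup β γ a (trunc a q) :=
    ⟨hβ.1, hβ.2, hγ, ha0, ae_mem_Icc_trunc ha0.le ((ae_iff.2 hq).mono fun _ hx => hx.1)⟩
  refine ⟨fun h1 => ?_, fun h1 => ?_⟩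
  · have hlt := h.limTime_lt_maxTime_of_one_lt h1
    have hT : Lenski.limTime β γ a (trunc a q) ∈ Ioo 0 (Lenski.maxTime β γ a) :=
      ⟨h.limTime_pos, hlt⟩
    refine ⟨_, hT, h.integral_stationaryDensity_limTime hlt,
      fun s' hs' h1' => h.eq_of_integral_stationaryDensity_eq_one hT hs'
        (h.integral_stationaryDensity_limTime hlt) h1', ?_⟩
    have := h.tendstoTV_lenski
    rwa [← h.withDensity_stationaryDensity_limTime hlt] at this
  · have := h.tendstoTV_lenski
    rwa [← h.withDensity_criticalDensity_add h1] at this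

/-- Lemma 13 of the paper. In the Lenski model, for `0 < a ≤ M`, the
sequence started from `δ_a` with mutant distribution `q^a` satisfies:
(1) if `∫ β q^a(dx)/(1-((1-β)/γ)^{1-x/a}) > 1` (possibly infinite), there is a unique
`s_a ∈ (0, a⁻¹ log(γ/(1-β)))` with `∫ β q^a(dx)/(1-((1-β)/γ) e^{s_a x}) = 1` and the
sequence converges in total variation to `p^{a,*}(dx) = β q^a(dx)/(1-((1-β)/γ) e^{s_a x})`;
(2) if `∫ β q^a(dx)/(1-((1-β)/γ)^{1-x/a}) ≤ 1`, the sequence converges in total variation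
to `p^{a,*}(dx) = β q^a(dx)/(1-((1-β)/γ)^{1-x/a})
+ (1 - ∫ β q^a(dy)/(1-((1-β)/γ)^{1-y/a})) δ_a`. -/
theorem stmt15 (M : ℝ) (hM : 0 < M) (β : ℝ) (hβ : β ∈ Set.Ioo (0:ℝ) 1) (γ : ℝ) (hγ : 1 < γ)
    (q : MeasureTheory.Measure ℝ) [IsProbabilityMeasure q]
    (hq : q ((Set.Icc 0 M)ᶜ) = 0)
    (a : ℝ) (ha0 : 0 < a) (haM : a ≤ M) :
    ((1 < ∫⁻ x, ENNReal.ofReal β *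
          (ENNReal.ofReal (1 - ((1 - β) / γ) ^ (1 - x / a)))⁻¹ ∂(trunc a q)) →
      ∃ s : ℝ, s ∈ Set.Ioo 0 (a⁻¹ * Real.log (γ / (1 - β))) ∧
        (∫ x, β / (1 - (1 - β) / γ * Real.exp (s * x)) ∂(trunc a q)) = 1 ∧
        (∀ s' : ℝ, s' ∈ Set.Ioo 0 (a⁻¹ * Real.log (γ / (1 - β))) →
          (∫ x, β / (1 - (1 - β) / γ * Real.exp (s' * x)) ∂(trunc a q)) = 1 → s' = s) ∧
        TendstoTV (lenski β γ (trunc a q) (MeasureTheory.Measure.dirac a))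
          ((trunc a q).withDensity fun x =>
            ENNReal.ofReal (β / (1 - (1 - β) / γ * Real.exp (s * x))))) ∧
    ((∫⁻ x, ENNReal.ofReal β *
          (ENNReal.ofReal (1 - ((1 - β) / γ) ^ (1 - x / a)))⁻¹ ∂(trunc a q) ≤ 1) →
      TendstoTV (lenski β γ (trunc a q) (MeasureTheory.Measure.dirac a))
        ((trunc a q).withDensity
            (fun x => ENNReal.ofReal β *
              (ENNReal.ofReal (1 - ((1 - β) / γ) ^ (1 - x / a)))⁻¹)
          + (1 - ∫⁻ y, ENNReal.ofReal β *
                (ENNReal.ofReal (1 - ((1 - β) / γ) ^ (1 - y / a)))⁻¹ ∂(trunc a q)) •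
              MeasureTheory.Measure.dirac a)) :=
  stmt15_general M β hβ γ hγ q hq a ha0
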